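/- arXiv:1110.0966 — 2 statements merged into one kernel-verified Lean document; each statement's English description precedes it below -/
import Mathlib

section
/- Every integer z ∈ ℤ is the value of a w-NAF-expansion whose weight is at most the weight of every multi-expansion with value z. -/
/-!
Write `W z` for the weight of the `w`-NAF of `z`, read off greedily from the bottom:
`W 0 = 0`, `W (b * z) = W z`, and `W (b ^ w * q + e) = W q + 1` when `e`, the balanced residue
of `z` modulo `b ^ w`, is a digit.
The heart of the proof is that adding one term `s * b ^ n` with `2 * |s| < |b| ^ w` raises `W`
by at most one. This goes by induction on `|z|`: where `s * b ^ n` meets the lowest window of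
`z`, the two produce one digit and a carry into the next window that is again smaller than
`|b| ^ w / 2`. Adding the terms of a multi-expansion of `z` one at a time then bounds `W z` by
its weight.
-/

/-- The digit set for integer base `b` and window `w`: `0` together with all
integers not divisible by `b` of absolute value less than `|b|^w / 2`. -/
def IntDigitSet (b : ℤ) (w : ℕ) : Set ℤ :=
  {d : ℤ | d = 0 ∨ (¬ b ∣ d ∧ 2 * |d| < |b| ^ w)}

/-- An expansion: a finitely supported sequence of digits. -/
def IsExpansion (D : Set ℤ) (η : ℕ →₀ ℤ) : Prop :=
  ∀ n, η n ∈ D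

/-- The `w`-NAF condition: any two distinct nonzero digits have indices at
distance at least `w`. -/
def IsWNAF (w : ℕ) (η : ℕ →₀ ℤ) : Prop :=
  ∀ m n : ℕ, m ≠ n → η m ≠ 0 → η n ≠ 0 → (w : ℤ) ≤ |(m : ℤ) - (n : ℤ)|

/-- The value of an expansion in base `b`: `∑ η_n · b^n`. -/
def evalue (b : ℤ) (η : ℕ →₀ ℤ) : ℤ :=
  η.sum fun n d => d * b ^ n

/-- The weight of an expansion: the number of nonzero digits. -/
def eweight (η : ℕ →₀ ℤ) : ℕ :=
  η.support.card

/-- A multi-expansion over the digit set `D`: a finite multiset of pairs `(d, n)`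
with `d ∈ D` nonzero. -/
def IsMultiExpansion (D : Set ℤ) (μ : Multiset (ℤ × ℕ)) : Prop :=
  ∀ x ∈ μ, x.1 ∈ D ∧ x.1 ≠ 0

/-- The value of a multi-expansion in base `b`: `∑ d · b^n`. -/
def mvalue (b : ℤ) (μ : Multiset (ℤ × ℕ)) : ℤ :=
  (μ.map fun x => x.1 * b ^ x.2).sum

namespace IntWNAF

variable {b : ℤ} {w : ℕ}

lemma isWNAF_iff {η : ℕ →₀ ℤ} :
    IsWNAF w η ↔ ∀ m n, m < n → η m ≠ 0 → η n ≠ 0 → m + w ≤ n := by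
  constructor
  · intro h m n hmn hm hn
    have := h m n hmn.ne hm hn
    rw [abs_of_nonpos (by omega)] at this
    omega
  · intro h m n hmn hm hn
    rcases hmn.lt_or_gt with hlt | hlt
    · have := h m n hlt hm hn
      rw [abs_of_nonpos (by omega)]
      omega
    · have := h n m hlt hn hm
      rw [abs_of_nonneg (by omega)]
      omega

noncomputable def shift (k : ℕ) (η : ℕ →₀ ℤ) : ℕ →₀ ℤ :=
  η.embDomain (addRightEmbedding k)

lemma shift_apply (k : ℕ) (η : ℕ →₀ ℤ) (n : ℕ) :
    shift k η n = if k ≤ n then η (n - k) else 0 := by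
  split_ifs with h
  · obtain ⟨m, rfl⟩ := Nat.exists_eq_add_of_le' h
    rw [Nat.add_sub_cancel]
    exact Finsupp.embDomain_apply_self (addRightEmbedding k) η m
  · refine Finsupp.embDomain_of_notMem_range _ _ _ ?_
    rintro ⟨m, rfl⟩
    simp at h

lemma shift_apply_ne_zero_iff {k n : ℕ} {η : ℕ →₀ ℤ} :
    shift k η n ≠ 0 ↔ k ≤ n ∧ η (n - k) ≠ 0 := by
  rw [shift_apply]
  split_ifs with h <;> simp [h]

lemma eweight_shift (k : ℕ) (η : ℕ →₀ ℤ) : eweight (shift k η) = eweight η := by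
  rw [eweight, eweight, shift, Finsupp.support_embDomain, Finset.card_map]

lemma evalue_shift (b : ℤ) (k : ℕ) (η : ℕ →₀ ℤ) : evalue b (shift k η) = b ^ k * evalue b η := by
  rw [evalue, shift, Finsupp.sum_embDomain, evalue, Finsupp.mul_sum]
  refine Finsupp.sum_congr fun n _ => ?_
  simp only [addRightEmbedding_apply, pow_add]
  ring

lemma evalue_single_add (b : ℤ) (e : ℤ) (η : ℕ →₀ ℤ) :
    evalue b (Finsupp.single 0 e + η) = e + evalue b η := by
  rw [evalue, Finsupp.sum_add_index' (fun _ => zero_mul _) (fun _ _ _ => add_mul _ _ _),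
    Finsupp.sum_single_index (zero_mul _), pow_zero, mul_one, evalue]

lemma isExpansion_shift {D : Set ℤ} (hD : 0 ∈ D) {η : ℕ →₀ ℤ} (h : IsExpansion D η) (k : ℕ) :
    IsExpansion D (shift k η) := by
  intro n
  rw [shift_apply]
  split_ifs
  exacts [h _, hD]

lemma isWNAF_shift {η : ℕ →₀ ℤ} (h : IsWNAF w η) (k : ℕ) : IsWNAF w (shift k η) := by
  rw [isWNAF_iff] at h ⊢
  intro m n hmn hm hn
  obtain ⟨hkm, hm⟩ := shift_apply_ne_zero_iff.mp hm
  obtain ⟨hkn, hn⟩ := shift_apply_ne_zero_iff.mp hn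
  have := h (m - k) (n - k) (by omega) hm hn
  omega

lemma single_add_shift_apply {k : ℕ} (hk : k ≠ 0) (e : ℤ) (η : ℕ →₀ ℤ) (n : ℕ) :
    (Finsupp.single 0 e + shift k η : ℕ →₀ ℤ) n = if n = 0 then e else shift k η n := by
  rw [Finsupp.add_apply, Finsupp.single_apply]
  rcases eq_or_ne n 0 with rfl | hn
  · rw [if_pos rfl, if_pos rfl, shift_apply, if_neg (by omega), add_zero]
  · rw [if_neg hn.symm, if_neg hn, zero_add]

lemma isExpansion_single_add_shift {D : Set ℤ} (hD : 0 ∈ D) {e : ℤ} (he : e ∈ D)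
    {η : ℕ →₀ ℤ} (h : IsExpansion D η) {k : ℕ} (hk : k ≠ 0) :
    IsExpansion D (Finsupp.single 0 e + shift k η) := by
  intro n
  rw [single_add_shift_apply hk]
  split_ifs
  exacts [he, isExpansion_shift hD h k n]

lemma isWNAF_single_add_shift {η : ℕ →₀ ℤ} (h : IsWNAF w η) (hw : w ≠ 0) (e : ℤ) :
    IsWNAF w (Finsupp.single 0 e + shift w η) := by
  rw [isWNAF_iff]
  intro m n hmn hm hn
  rw [single_add_shift_apply hw] at hm hn
  rw [if_neg (by omega)] at hn
  by_cases hm0 : m = 0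
  · have := (shift_apply_ne_zero_iff.mp hn).1
    omega
  · rw [if_neg hm0] at hm
    exact isWNAF_iff.mp (isWNAF_shift h w) m n hmn hm hn

lemma eweight_single_add_shift {k : ℕ} (hk : k ≠ 0) {e : ℤ} (he : e ≠ 0) (η : ℕ →₀ ℤ) :
    eweight (Finsupp.single 0 e + shift k η) = eweight η + 1 := by
  have hdisj : Disjoint (Finsupp.single 0 e).support (shift k η).support := by
    rw [Finsupp.support_single 0 he, Finset.disjoint_singleton_left,
      Finsupp.notMem_support_iff, shift_apply, if_neg (by omega)]
  rw [eweight, Finsupp.support_add_eq hdisj, Finset.card_union_of_disjoint hdisj,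
    Finsupp.support_single 0 he, Finset.card_singleton, ← eweight, eweight_shift, add_comm]

lemma natCast_natAbs_pow (b : ℤ) (w : ℕ) : ((b.natAbs ^ w : ℕ) : ℤ) = |b| ^ w := by simp

lemma exists_eq_pow_mul_and_not_dvd (hb : b.natAbs ≠ 1) {z : ℤ} (hz : z ≠ 0) :
    ∃ k u, z = b ^ k * u ∧ ¬ b ∣ u :=
  ⟨_, (Int.finiteMultiplicity_iff.mpr ⟨hb, hz⟩).exists_eq_pow_mul_and_not_dvd⟩

lemma ne_zero_of_two_le_abs (hb : 2 ≤ |b|) : b ≠ 0 := by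
  rintro rfl; simp at hb

lemma natAbs_ne_one (hb : 2 ≤ |b|) : b.natAbs ≠ 1 := by
  zify; omega

lemma abs_lt_abs_mul (hb : 2 ≤ |b|) {c : ℤ} (hc : c ≠ 0) : |c| < |b * c| := by
  rw [abs_mul]; nlinarith [abs_pos.mpr hc]

lemma two_mul_abs_lt_of_abs_mul_lt (hb : 2 ≤ |b|) {c : ℤ} (h : |b * c| < |b| ^ w) :
    2 * |c| < |b| ^ w := by
  rw [abs_mul] at h; nlinarith [abs_nonneg c]

lemma abs_le_abs_pow_mul (hb : 1 ≤ |b|) (k : ℕ) (q : ℤ) : |q| ≤ |b ^ k * q| := by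
  rw [abs_mul, abs_pow]; exact le_mul_of_one_le_left (abs_nonneg q) (one_le_pow₀ hb)

lemma abs_pow_pred_mul_lt_abs_pow_mul_add (hb : 2 ≤ |b|) (hw : w ≠ 0) {q e : ℤ}
    (he : 2 * |e| < |b| ^ w) (hz : b ^ w * q + e ≠ 0) :
    |b ^ (w - 1) * q| < |b ^ w * q + e| := by
  rcases eq_or_ne q 0 with rfl | hq
  · simpa using abs_pos.mpr hz
  have hP : 0 < |b| ^ (w - 1) := by positivity
  have hN : |b| ^ w = |b| ^ (w - 1) * |b| := by rw [← pow_succ]; congr 1; omega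
  have hq1 : 1 ≤ |q| := Int.one_le_abs hq
  have htri : |b ^ w * q| ≤ |b ^ w * q + e| + |e| := by
    simpa using abs_add_le (b ^ w * q + e) (-e)
  rw [abs_mul, abs_pow, hN] at htri
  rw [abs_mul, abs_pow]
  rw [hN] at he
  nlinarith [mul_nonneg (mul_nonneg hP.le (by linarith : (0 : ℤ) ≤ |b| - 2))
    (by linarith : (0 : ℤ) ≤ 2 * |q| - 1), mul_nonneg hP.le (by linarith : (0 : ℤ) ≤ |q| - 1)]

lemma abs_lt_abs_pow_mul_add (hb : 2 ≤ |b|) (hw : w ≠ 0) {q e : ℤ}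
    (he : 2 * |e| < |b| ^ w) (hz : b ^ w * q + e ≠ 0) : |q| < |b ^ w * q + e| :=
  (abs_le_abs_pow_mul (by omega) _ q).trans_lt (abs_pow_pred_mul_lt_abs_pow_mul_add hb hw he hz)

lemma two_mul_abs_lt_of_pow_mul_add_eq (hb : 2 ≤ |b|) (hw : 2 ≤ w) {r d x y : ℤ} {j : ℕ}
    (hj : j < w) (hd : 2 * |d| < |b| ^ w) (hx : 2 * |x| < |b| ^ w) (hy : 2 * |y| < |b| ^ w)
    (h : b ^ w * r + d = x + y * b ^ j) : 2 * |r| < |b| ^ w := by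
  set P := |b| ^ (w - 1)
  have hN : |b| ^ w = P * |b| := by rw [← pow_succ]; congr 1; omega
  have hP : 2 ≤ P := hb.trans (le_self_pow₀ (by omega) (by omega))
  have hjP : |y| * |b| ^ j ≤ |y| * P :=
    mul_le_mul_of_nonneg_left (pow_le_pow_right₀ (by omega) (by omega)) (abs_nonneg y)
  have hr : |b| ^ w * |r| ≤ |x| + |y| * |b| ^ j + |d| := by
    calc |b| ^ w * |r| = |x + y * b ^ j - d| := by rw [← abs_pow, ← abs_mul]; congr 1; linarith
      _ ≤ |x| + |y * b ^ j| + |d| := by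
        linarith [abs_sub (x + y * b ^ j) d, abs_add_le x (y * b ^ j)]
      _ = |x| + |y| * |b| ^ j + |d| := by rw [abs_mul, abs_pow]
  have hyP : 2 * |y| * P < |b| ^ w * P := mul_lt_mul_of_pos_right hy (by omega)
  have hPN : |b| ^ w * (P + 2) ≤ |b| ^ w * |b| ^ w :=
    mul_le_mul_of_nonneg_left (by rw [hN]; nlinarith) (by positivity)
  have : |b| ^ w * (2 * |r|) < |b| ^ w * |b| ^ w := by nlinarith
  exact lt_of_mul_lt_mul_left this (by positivity)

def digit (b : ℤ) (w : ℕ) (z : ℤ) : ℤ :=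
  z.bmod (b.natAbs ^ w)

lemma pow_dvd_sub_digit (z : ℤ) : b ^ w ∣ z - digit b w z := by
  have h : ((b.natAbs ^ w : ℕ) : ℤ) ∣ z - digit b w z := Int.ModEq.dvd Int.bmod_emod
  rwa [natCast_natAbs_pow, ← abs_pow, abs_dvd] at h

lemma digit_eq_of_pow_dvd_sub {x y : ℤ} (hxy : b ^ w ∣ x - y) (hy : 2 * |y| < |b| ^ w) :
    digit b w x = y := by
  have hN : 0 < b.natAbs ^ w := by zify; linarith [abs_nonneg y]
  rw [digit, Int.bmod_eq_iff hN, natCast_natAbs_pow]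
  refine ⟨?_, ?_, ?_⟩
  · cases abs_cases y <;> omega
  · cases abs_cases y <;> omega
  · rwa [← abs_pow, abs_dvd, dvd_sub_comm]

lemma dvd_of_two_mul_eq_abs_pow (hw : 2 ≤ w) {y : ℤ} (h : 2 * y = |b| ^ w) : b ∣ y := by
  obtain ⟨c, hc⟩ := (Int.even_pow.mp ⟨y, by rw [← h]; ring⟩).1
  have hy : y = |b| ^ (w - 1) * c := by
    have hN : |b| ^ w = |b| ^ (w - 1) * |b| := by rw [← pow_succ]; congr 1; omega
    have h2 : 2 * y = 2 * (|b| ^ (w - 1) * c) := by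
      linear_combination h + hN + |b| ^ (w - 1) * hc
    linarith
  rw [hy]
  exact (((dvd_abs b b).mpr dvd_rfl).trans (dvd_pow_self _ (by omega))).mul_right c

/-- The boundary residue `-|b|^w / 2` is excluded because it is divisible by `b` when `w ≥ 2`. -/
lemma digit_spec (hb : b ≠ 0) (hw : 2 ≤ w) {z : ℤ} (hz : ¬ b ∣ z) :
    ¬ b ∣ digit b w z ∧ 2 * |digit b w z| < |b| ^ w := by
  have hbd : ¬ b ∣ digit b w z := fun h => hz <| by
    simpa using ((dvd_pow_self b (by omega : w ≠ 0)).trans (pow_dvd_sub_digit z)).add h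
  refine ⟨hbd, ?_⟩
  have hN : 0 < b.natAbs ^ w := by positivity
  have hlo := Int.le_bmod (x := z) hN
  have hhi := Int.bmod_lt (x := z) hN
  rw [natCast_natAbs_pow] at hlo hhi
  rw [← digit] at hlo hhi
  by_contra hge
  refine hbd (dvd_neg.mp (dvd_of_two_mul_eq_abs_pow hw ?_))
  cases abs_cases (digit b w z) <;> omega

lemma exists_eq_pow_mul_add_digit (hb : b ≠ 0) (hw : 2 ≤ w) {z : ℤ} (hz : ¬ b ∣ z) :
    ∃ q e, z = b ^ w * q + e ∧ ¬ b ∣ e ∧ 2 * |e| < |b| ^ w :=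
  ⟨(z - digit b w z) / b ^ w, digit b w z,
    by rw [Int.mul_ediv_cancel' (pow_dvd_sub_digit z)]; ring, digit_spec hb hw hz⟩

def nafWeight (hb : 2 ≤ |b|) (hw : 2 ≤ w) (z : ℤ) : ℕ :=
  if hz : z = 0 then 0
  else if hbz : b ∣ z then nafWeight hb hw (z / b)
  else nafWeight hb hw ((z - digit b w z) / b ^ w) + 1
termination_by z.natAbs
decreasing_by
  · obtain ⟨c, rfl⟩ := hbz
    zify
    rw [Int.mul_ediv_cancel_left c (ne_zero_of_two_le_abs hb)]
    exact abs_lt_abs_mul hb (right_ne_zero_of_mul hz)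
  · zify
    have hq := abs_lt_abs_pow_mul_add hb (by omega) (digit_spec (ne_zero_of_two_le_abs hb) hw hbz).2
      (q := (z - digit b w z) / b ^ w)
    rw [Int.mul_ediv_cancel' (pow_dvd_sub_digit z), sub_add_cancel] at hq
    exact hq hz

section nafWeight

variable (hb : 2 ≤ |b|) (hw : 2 ≤ w)

@[simp]
lemma nafWeight_zero : nafWeight hb hw 0 = 0 := by
  rw [nafWeight]; simp

lemma nafWeight_mul_left (z : ℤ) : nafWeight hb hw (b * z) = nafWeight hb hw z := by
  rcases eq_or_ne z 0 with rfl | hz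
  · simp
  rw [nafWeight, dif_neg (mul_ne_zero (ne_zero_of_two_le_abs hb) hz),
    dif_pos (dvd_mul_right b z), Int.mul_ediv_cancel_left z (ne_zero_of_two_le_abs hb)]

lemma nafWeight_pow_mul (k : ℕ) (z : ℤ) : nafWeight hb hw (b ^ k * z) = nafWeight hb hw z := by
  induction k with
  | zero => simp
  | succ k ih => rw [pow_succ', mul_assoc, nafWeight_mul_left, ih]

lemma nafWeight_pow_mul_add {e : ℤ} (he : ¬ b ∣ e) (he' : 2 * |e| < |b| ^ w) (q : ℤ) :
    nafWeight hb hw (b ^ w * q + e) = nafWeight hb hw q + 1 := by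
  have hbw : b ∣ b ^ w * q := (dvd_pow_self b (by omega)).mul_right q
  have hx : ¬ b ∣ b ^ w * q + e := fun h => he <| by simpa using h.sub hbw
  have hx0 : b ^ w * q + e ≠ 0 := fun h => hx (by rw [h]; exact dvd_zero b)
  rw [nafWeight, dif_neg hx0, dif_neg hx,
    digit_eq_of_pow_dvd_sub (by simp) he', add_sub_cancel_right,
    Int.mul_ediv_cancel_left q (pow_ne_zero w (ne_zero_of_two_le_abs hb))]

lemma nafWeight_le_one {s : ℤ} (hs : 2 * |s| < |b| ^ w) : nafWeight hb hw s ≤ 1 := by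
  rcases eq_or_ne s 0 with rfl | hs0
  · simp
  obtain ⟨k, m, rfl, hm⟩ := exists_eq_pow_mul_and_not_dvd (natAbs_ne_one hb) hs0
  have hm' : 2 * |m| < |b| ^ w := by
    linarith [abs_le_abs_pow_mul (by omega : 1 ≤ |b|) k m]
  rw [nafWeight_pow_mul, ← zero_add m, ← mul_zero (b ^ w), nafWeight_pow_mul_add hb hw hm hm']
  simp

lemma nafWeight_pow_mul_add_le {q x y : ℤ} {j : ℕ} (hj : j < w) (hx : 2 * |x| < |b| ^ w)
    (hy : 2 * |y| < |b| ^ w) (hxy : ¬ b ∣ x + y * b ^ j)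
    (hq : ∀ r, 2 * |r| < |b| ^ w → nafWeight hb hw (q + r) ≤ nafWeight hb hw q + 1) :
    nafWeight hb hw (b ^ w * q + (x + y * b ^ j)) ≤ nafWeight hb hw q + 2 := by
  obtain ⟨r, d, hrd, hd, hd'⟩ := exists_eq_pow_mul_add_digit (ne_zero_of_two_le_abs hb) hw hxy
  have hr := two_mul_abs_lt_of_pow_mul_add_eq hb hw hj hd' hx hy hrd.symm
  rw [hrd, ← add_assoc, ← mul_add, nafWeight_pow_mul_add hb hw hd hd']
  have := hq r hr
  omega

lemma nafWeight_pow_mul_add_le_of_not_dvd {k : ℕ} (hk : k ≠ 0) {u s : ℤ} (hu : ¬ b ∣ u)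
    (hs : ¬ b ∣ s) (hs' : 2 * |s| < |b| ^ w)
    (ih : ∀ y, |y| < |b ^ k * u| → ∀ (n : ℕ) (s : ℤ), 2 * |s| < |b| ^ w →
      nafWeight hb hw (y + s * b ^ n) ≤ nafWeight hb hw y + 1) :
    nafWeight hb hw (b ^ k * u + s) ≤ nafWeight hb hw u + 1 := by
  obtain ⟨q, e, rfl, he, he'⟩ := exists_eq_pow_mul_add_digit (ne_zero_of_two_le_abs hb) hw hu
  rw [nafWeight_pow_mul_add hb hw he he']
  rcases le_or_gt w k with hwk | hkw
  · obtain ⟨m, rfl⟩ := Nat.exists_eq_add_of_le hwk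
    rw [pow_add, mul_assoc, nafWeight_pow_mul_add hb hw hs hs', nafWeight_pow_mul,
      nafWeight_pow_mul_add hb hw he he']
  have hu0 : b ^ w * q + e ≠ 0 := fun h => hu (by rw [h]; exact dvd_zero b)
  have hlt : |b ^ k * q| < |b ^ k * (b ^ w * q + e)| := by
    rw [abs_mul, abs_mul, abs_pow]
    exact mul_lt_mul_of_pos_left (abs_lt_abs_pow_mul_add hb (by omega) he' hu0)
      (pow_pos (by omega) k)
  have hst : ¬ b ∣ s + e * b ^ k := fun h =>
    hs (by simpa using h.sub ((dvd_pow_self b hk).mul_left e))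
  have := nafWeight_pow_mul_add_le hb hw hkw hs' he' hst
    (fun r hr => by simpa only [pow_zero, mul_one] using ih _ hlt 0 r hr)
  rw [nafWeight_pow_mul] at this
  calc nafWeight hb hw (b ^ k * (b ^ w * q + e) + s)
      = nafWeight hb hw (b ^ w * (b ^ k * q) + (s + e * b ^ k)) := by congr 1; ring
    _ ≤ nafWeight hb hw q + 1 + 1 := this

lemma nafWeight_add_mul_pow_le_of_dvd {z : ℤ} (hz : z ≠ 0) (hbz : b ∣ z)
    (ih : ∀ y, |y| < |z| → ∀ (n : ℕ) (s : ℤ), 2 * |s| < |b| ^ w →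
      nafWeight hb hw (y + s * b ^ n) ≤ nafWeight hb hw y + 1)
    (n : ℕ) {s : ℤ} (hs : 2 * |s| < |b| ^ w) :
    nafWeight hb hw (z + s * b ^ n) ≤ nafWeight hb hw z + 1 := by
  obtain ⟨z', rfl⟩ := hbz
  have hlt : |z'| < |b * z'| := abs_lt_abs_mul hb (right_ne_zero_of_mul hz)
  have hdiv : ∀ (n' : ℕ) (s' : ℤ), 2 * |s'| < |b| ^ w →
      b * z' + s * b ^ n = b * (z' + s' * b ^ n') →
      nafWeight hb hw (b * z' + s * b ^ n) ≤ nafWeight hb hw (b * z') + 1 := by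
    intro n' s' hs' h
    rw [h, nafWeight_mul_left, nafWeight_mul_left]
    exact ih z' hlt n' s' hs'
  rcases n with _ | n
  · by_cases hbs : b ∣ s
    · obtain ⟨s', rfl⟩ := hbs
      exact hdiv 0 s' (two_mul_abs_lt_of_abs_mul_lt hb (by linarith [abs_nonneg (b * s')]))
        (by ring)
    obtain ⟨k, u, hzu, hu⟩ := exists_eq_pow_mul_and_not_dvd (natAbs_ne_one hb) hz
    have hk : k ≠ 0 := by
      rintro rfl
      rw [pow_zero, one_mul] at hzu
      exact hu (hzu ▸ dvd_mul_right b z')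
    rw [hzu] at ih ⊢
    simpa only [pow_zero, mul_one, nafWeight_pow_mul] using
      nafWeight_pow_mul_add_le_of_not_dvd hb hw hk hu hbs hs ih
  · exact hdiv n s hs (by ring)

lemma nafWeight_add_mul_pow_le_of_not_dvd {z : ℤ} (hbz : ¬ b ∣ z)
    (ih : ∀ y, |y| < |z| → ∀ (n : ℕ) (s : ℤ), 2 * |s| < |b| ^ w →
      nafWeight hb hw (y + s * b ^ n) ≤ nafWeight hb hw y + 1)
    (n : ℕ) {s : ℤ} (hs : 2 * |s| < |b| ^ w) :
    nafWeight hb hw (z + s * b ^ n) ≤ nafWeight hb hw z + 1 := by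
  obtain ⟨q, e, rfl, he, he'⟩ := exists_eq_pow_mul_add_digit (ne_zero_of_two_le_abs hb) hw hbz
  have hz0 : b ^ w * q + e ≠ 0 := fun h => hbz (by rw [h]; exact dvd_zero b)
  have hlt := abs_pow_pred_mul_lt_abs_pow_mul_add hb (by omega) he' hz0
  have hq := abs_lt_abs_pow_mul_add hb (by omega) he' hz0
  rw [nafWeight_pow_mul_add hb hw he he']
  rcases le_or_gt w n with hwn | hnw
  · obtain ⟨k, rfl⟩ := Nat.exists_eq_add_of_le hwn
    have := ih q hq k s hs
    calc nafWeight hb hw (b ^ w * q + e + s * b ^ (w + k))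
        = nafWeight hb hw (b ^ w * (q + s * b ^ k) + e) := by congr 1; ring
      _ = nafWeight hb hw (q + s * b ^ k) + 1 := nafWeight_pow_mul_add hb hw he he' _
      _ ≤ nafWeight hb hw q + 1 + 1 := by omega
  by_cases ht : b ∣ e + s * b ^ n
  · -- Then `n = 0`, and after factoring out `b` the induction applies to `b ^ (w - 1) * q`.
    obtain rfl : n = 0 := by
      by_contra hn
      exact he (by simpa using ht.sub ((dvd_pow_self b hn).mul_left s))
    obtain ⟨c, hc⟩ := ht
    have hc' : 2 * |c| < |b| ^ w := by
      refine two_mul_abs_lt_of_abs_mul_lt hb ?_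
      rw [← hc, pow_zero, mul_one]
      exact (abs_add_le e s).trans_lt (by linarith)
    have hbw : b ^ w = b * b ^ (w - 1) := by rw [← pow_succ']; congr 1; omega
    calc nafWeight hb hw (b ^ w * q + e + s * b ^ 0)
        = nafWeight hb hw (b ^ (w - 1) * q + c * b ^ 0) := by
          rw [add_assoc, hc, hbw, mul_assoc, ← mul_add, nafWeight_mul_left, pow_zero, mul_one]
      _ ≤ nafWeight hb hw (b ^ (w - 1) * q) + 1 := ih _ hlt 0 c hc'
      _ ≤ nafWeight hb hw q + 1 + 1 := by rw [nafWeight_pow_mul]; omega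
  have := nafWeight_pow_mul_add_le hb hw hnw he' hs ht
    (fun r hr => by simpa only [pow_zero, mul_one] using ih q hq 0 r hr)
  rw [add_assoc]
  omega

theorem nafWeight_add_mul_pow_le (z : ℤ) (n : ℕ) {s : ℤ} (hs : 2 * |s| < |b| ^ w) :
    nafWeight hb hw (z + s * b ^ n) ≤ nafWeight hb hw z + 1 := by
  have ih : ∀ y, |y| < |z| → ∀ (n : ℕ) (s : ℤ), 2 * |s| < |b| ^ w →
      nafWeight hb hw (y + s * b ^ n) ≤ nafWeight hb hw y + 1 :=
    fun y hy n s hs => nafWeight_add_mul_pow_le y n hs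
  rcases eq_or_ne z 0 with rfl | hz
  · rw [zero_add, mul_comm, nafWeight_pow_mul, nafWeight_zero]
    exact nafWeight_le_one hb hw hs
  by_cases hbz : b ∣ z
  · exact nafWeight_add_mul_pow_le_of_dvd hb hw hz hbz ih n hs
  · exact nafWeight_add_mul_pow_le_of_not_dvd hb hw hbz ih n hs
termination_by z.natAbs
decreasing_by zify; exact hy

lemma nafWeight_mvalue_le {μ : Multiset (ℤ × ℕ)} (hμ : IsMultiExpansion (IntDigitSet b w) μ) :
    nafWeight hb hw (mvalue b μ) ≤ Multiset.card μ := by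
  induction μ using Multiset.induction_on with
  | empty => simp [mvalue]
  | cons x μ ih =>
    have hx := hμ x (Multiset.mem_cons_self x μ)
    have hs : 2 * |x.1| < |b| ^ w := (hx.1.resolve_left hx.2).2
    rw [mvalue, Multiset.map_cons, Multiset.sum_cons, ← mvalue, add_comm, Multiset.card_cons]
    exact (nafWeight_add_mul_pow_le hb hw _ _ hs).trans
      (Nat.add_le_add_right (ih fun y hy => hμ y (Multiset.mem_cons_of_mem hy)) 1)

end nafWeight

theorem exists_wnaf_eweight_eq_nafWeight (hb : 2 ≤ |b|) (hw : 2 ≤ w) (z : ℤ) :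
    ∃ η : ℕ →₀ ℤ, IsExpansion (IntDigitSet b w) η ∧ IsWNAF w η ∧ evalue b η = z ∧
      eweight η = nafWeight hb hw z := by
  have h0 : (0 : ℤ) ∈ IntDigitSet b w := Or.inl rfl
  rcases eq_or_ne z 0 with rfl | hz
  · exact ⟨0, fun _ => h0, fun _ _ _ h => absurd rfl h, by simp [evalue], by simp [eweight]⟩
  by_cases hbz : b ∣ z
  · obtain ⟨z', rfl⟩ := hbz
    obtain ⟨η, hD, hN, hv, hwt⟩ := exists_wnaf_eweight_eq_nafWeight hb hw z'
    exact ⟨shift 1 η, isExpansion_shift h0 hD 1, isWNAF_shift hN 1,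
      by rw [evalue_shift, hv, pow_one], by rw [eweight_shift, hwt, nafWeight_mul_left]⟩
  · obtain ⟨q, e, rfl, he, he'⟩ := exists_eq_pow_mul_add_digit (ne_zero_of_two_le_abs hb) hw hbz
    obtain ⟨η, hD, hN, hv, hwt⟩ := exists_wnaf_eweight_eq_nafWeight hb hw q
    have he0 : e ≠ 0 := fun h => he (h ▸ dvd_zero b)
    exact ⟨Finsupp.single 0 e + shift w η,
      isExpansion_single_add_shift h0 (Or.inr ⟨he, he'⟩) hD (by omega),
      isWNAF_single_add_shift hN (by omega) e,
      by rw [evalue_single_add, evalue_shift, hv, add_comm],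
      by rw [eweight_single_add_shift (by omega) he0, hwt, nafWeight_pow_mul_add hb hw he he']⟩
termination_by z.natAbs
decreasing_by
  all_goals subst_vars; zify
  · exact abs_lt_abs_mul hb (right_ne_zero_of_mul hz)
  · exact abs_lt_abs_pow_mul_add hb (by omega) he' hz

end IntWNAF

/-- Optimality of `w`-NAFs for integer bases: every integer is the value of a
`w`-NAF-expansion whose weight is minimal among all multi-expansions of the
same value. -/
theorem wnaf_optimal_integer_base (b : ℤ) (hb : 2 ≤ |b|) (w : ℕ) (hw : 2 ≤ w) :
    ∀ z : ℤ, ∃ η : ℕ →₀ ℤ,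
      IsExpansion (IntDigitSet b w) η ∧ IsWNAF w η ∧ evalue b η = z ∧
      ∀ μ : Multiset (ℤ × ℕ), IsMultiExpansion (IntDigitSet b w) μ →
        mvalue b μ = z → eweight η ≤ Multiset.card μ := by
  intro z
  obtain ⟨η, hD, hN, hv, hwt⟩ := IntWNAF.exists_wnaf_eweight_eq_nafWeight hb hw z
  refine ⟨η, hD, hN, hv, fun μ hμ hμz => ?_⟩
  rw [hwt, ← hμz]
  exact IntWNAF.nafWeight_mvalue_le hb hw hμ
end

section
/- For all nonzero digits c, d ∈ D and all m, n ∈ ℕ, the integer b^m·c + b^n·d is the value of some w-NAF-expansion of weight at most 2 (i.e., the digit set D is w-subadditive). -/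
/-- Factor out the `b`-adic valuation. -/
lemma exists_factor_pow (b : ℤ) (hb : 2 ≤ |b|) :
    ∀ z : ℤ, z ≠ 0 → ∃ j : ℕ, ∃ u : ℤ, z = b ^ j * u ∧ ¬ b ∣ u ∧ |u| ≤ |z| := by
  suffices H : ∀ n : ℕ, ∀ z : ℤ, z.natAbs = n → z ≠ 0 →
      ∃ j : ℕ, ∃ u : ℤ, z = b ^ j * u ∧ ¬ b ∣ u ∧ |u| ≤ |z| by
    intro z; exact H z.natAbs z rfl
  intro n
  induction n using Nat.strong_induction_on with
  | _ n ih =>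
    intro z hn hz
    by_cases h : b ∣ z
    · obtain ⟨z', rfl⟩ := h
      have hz' : z' ≠ 0 := by rintro rfl; simp at hz
      have hlt : z'.natAbs < n := by
        subst hn
        rw [Int.natAbs_mul]
        have h1 : 2 ≤ b.natAbs := by
          have := hb; rw [Int.abs_eq_natAbs] at this; exact_mod_cast this
        have h2 : 0 < z'.natAbs := Int.natAbs_pos.mpr hz'
        calc z'.natAbs < 2 * z'.natAbs := by omega
          _ ≤ b.natAbs * z'.natAbs := Nat.mul_le_mul_right _ h1
      obtain ⟨j, u, h1, h2, h3⟩ := ih _ hlt z' rfl hz'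
      refine ⟨j + 1, u, by rw [pow_succ, h1]; ring, h2, ?_⟩
      calc |u| ≤ |z'| := h3
        _ ≤ |b| * |z'| := le_mul_of_one_le_left (abs_nonneg _) (by linarith)
        _ = |b * z'| := (abs_mul b z').symm
    · exact ⟨0, z, by ring, h, le_refl _⟩

/-- A two-digit (or fewer) expansion at positions `p` and `q ≥ p + w`. -/
lemma pair_expansion (b : ℤ) (w : ℕ) (hw : 1 ≤ w) (p q : ℕ) (u v : ℤ)
    (hu : u ∈ IntDigitSet b w) (hv : v ∈ IntDigitSet b w) (hpq : p + w ≤ q) :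
    ∃ η : ℕ →₀ ℤ, IsExpansion (IntDigitSet b w) η ∧ IsWNAF w η ∧
      evalue b η = b ^ p * u + b ^ q * v ∧ eweight η ≤ 2 := by
  have hpq' : p ≠ q := by omega
  have happly : ∀ n : ℕ, (Finsupp.single p u + Finsupp.single q v) n
      = (if p = n then u else 0) + (if q = n then v else 0) := by
    intro n; simp [Finsupp.single_apply]
  refine ⟨Finsupp.single p u + Finsupp.single q v, ?_, ?_, ?_, ?_⟩
  · intro n
    rw [happly]
    split_ifs with h1 h2 h2
    · exact absurd (h1.trans h2.symm) hpq'
    · simpa using hu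
    · simpa using hv
    · exact Or.inl (by ring)
  · have key : ∀ i : ℕ, (Finsupp.single p u + Finsupp.single q v) i ≠ 0 → i = p ∨ i = q := by
      intro i hi
      by_contra hc
      push_neg at hc
      rw [happly, if_neg (Ne.symm hc.1), if_neg (Ne.symm hc.2)] at hi
      simp at hi
    intro i j hij hi hj
    have hw0 : (1:ℤ) ≤ (w:ℤ) := by exact_mod_cast hw
    have hcast : (p:ℤ) + w ≤ q := by exact_mod_cast hpq
    have key2 : (w : ℤ) ≤ |(p : ℤ) - (q : ℤ)| := by
      rw [abs_sub_comm, abs_of_nonneg (by linarith)]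
      linarith
    rcases key i hi with rfl | rfl <;> rcases key j hj with rfl | rfl
    · omega
    · exact key2
    · rwa [abs_sub_comm]
    · omega
  · unfold evalue
    rw [Finsupp.sum_add_index' (fun i => by ring) (fun i x y => by ring)]
    rw [Finsupp.sum_single_index (by ring), Finsupp.sum_single_index (by ring)]
    ring
  · unfold eweight
    calc (Finsupp.single p u + Finsupp.single q v).support.card
        ≤ ((Finsupp.single p u).support ∪ (Finsupp.single q v).support).card :=
          Finset.card_le_card Finsupp.support_add
      _ ≤ ({p} ∪ {q} : Finset ℕ).card := Finset.card_le_card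
          (Finset.union_subset_union Finsupp.support_single_subset Finsupp.support_single_subset)
      _ ≤ 2 := by
          apply le_trans (Finset.card_union_le _ _); simp

lemma bmod_digit (b : ℤ) (hb : 2 ≤ |b|) (w : ℕ) (hw : 2 ≤ w) (u : ℤ) (hu : ¬ b ∣ u) :
    Int.bmod u (b ^ w).natAbs ∈ IntDigitSet b w ∧
    (b ^ w : ℤ) ∣ u - Int.bmod u (b ^ w).natAbs := by
  set B : ℕ := (b ^ w).natAbs with hB
  have hb0 : b ≠ 0 := by rintro rfl; simp at hb
  have hBval : ((B : ℤ)) = |b| ^ w := by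
    rw [hB, Nat.cast_natAbs]; push_cast; rw [abs_pow]
  have hBpos : 0 < B := by
    rw [hB, Int.natAbs_pos]; exact pow_ne_zero _ hb0
  set r : ℤ := Int.bmod u B with hr
  have h1 : (B:ℤ) ∣ u % B - u := Int.dvd_emod_sub_self
  have hdvd : (B : ℤ) ∣ u - r := by
    rw [hr, Int.bmod_def]
    split
    · exact dvd_sub_comm.mp h1
    · have heq : u - (u % (B:ℤ) - (B:ℤ)) = (u - u % B) + B := by ring
      rw [heq]
      exact dvd_add (dvd_sub_comm.mp h1) dvd_rfl
  have hdvd' : (b ^ w : ℤ) ∣ u - r := by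
    have : (b ^ w : ℤ) ∣ (B : ℤ) := by
      rw [hBval, ← abs_pow]; exact (dvd_abs _ _).mpr dvd_rfl
    exact this.trans hdvd
  have hbB : b ∣ (B : ℤ) := by
    rw [hBval, ← abs_pow]
    exact (dvd_abs _ _).mpr (dvd_pow_self b (by omega))
  have hbr : ¬ b ∣ r := by
    intro hc
    apply hu
    have h2 : b ∣ u - r := hbB.trans hdvd
    have := dvd_add h2 hc
    simpa using this
  have hub : r < ((B : ℤ) + 1) / 2 := Int.bmod_lt hBpos
  have hlb : -((B : ℤ) / 2) ≤ r := Int.le_bmod hBpos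
  have habs : 2 * |r| < |b| ^ w := by
    rw [← hBval]
    rcases le_or_gt 0 r with h | h
    · rw [abs_of_nonneg h]; omega
    · rw [abs_of_neg h]
      -- 2 * (-r) ≤ 2 * (B/2) ≤ B; rule out equality using b ∤ r
      rcases lt_or_eq_of_le hlb with h5 | h5
      · omega
      · -- r = -(B/2) and if 2*(-r) = B then B even
        by_cases h6 : 2 * (-r) = (B:ℤ)
        · exfalso
          have h2b : (2:ℤ) ∣ |b| := by
            have h7 : (2:ℤ) ∣ |b| ^ w := by rw [← hBval]; exact ⟨-r, by omega⟩
            exact Int.Prime.dvd_pow' Nat.prime_two h7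
          obtain ⟨a, ha⟩ := h2b
          apply hbr
          have hw2 : w = (w - 2) + 2 := by omega
          have hBcalc : (B:ℤ) = 2 * (|b| * (|b| ^ (w - 2) * a)) := by
            rw [hBval]
            conv_lhs => rw [hw2]
            rw [ha]; ring
          have hrval : r = -(|b| * (|b| ^ (w-2) * a)) := by omega
          have hbabs : b ∣ |b| := (dvd_abs b b).mpr dvd_rfl
          rw [hrval]
          exact dvd_neg.mpr (hbabs.mul_right _)
        · omega
  exact ⟨Or.inr ⟨hbr, habs⟩, hdvd'⟩

lemma expand_small (b : ℤ) (hb : 2 ≤ |b|) (w : ℕ) (hw : 2 ≤ w) (z : ℤ)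
    (hz : 2 * |z| < |b| ^ w * (1 + |b| ^ (w - 1))) (m : ℕ) :
    ∃ η : ℕ →₀ ℤ, IsExpansion (IntDigitSet b w) η ∧ IsWNAF w η ∧
      evalue b η = b ^ m * z ∧ eweight η ≤ 2 := by
  have hb1 : (1:ℤ) ≤ |b| := by linarith
  have hbw_pos : (0:ℤ) < |b| ^ w := pow_pos (by linarith) w
  have h0D : (0:ℤ) ∈ IntDigitSet b w := Or.inl rfl
  rcases eq_or_ne z 0 with rfl | hz0
  · obtain ⟨η, e1, e2, e3, e4⟩ := pair_expansion b w (by omega) m (m + w) 0 0 h0D h0D le_rfl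
    exact ⟨η, e1, e2, by rw [e3]; ring, e4⟩
  obtain ⟨j, u, hju, hbu, huz⟩ := exists_factor_pow b hb z hz0
  obtain ⟨hrD, hdvd⟩ := bmod_digit b hb w hw u hbu
  set r : ℤ := Int.bmod u (b ^ w).natAbs with hr
  have h2r : 2 * |r| < |b| ^ w := by
    rcases hrD with h | h
    · rw [h]; simpa using hbw_pos
    · exact h.2
  obtain ⟨s, hs⟩ := hdvd
  have hu_eq : u = r + b ^ w * s := by linarith [hs]
  have h2u : 2 * |u| < |b| ^ w * (1 + |b| ^ (w - 1)) := by
    have := abs_nonneg z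
    linarith [huz]
  have h2s : 2 * |s| ≤ |b| ^ (w - 1) + 1 := by
    have habs : |b| ^ w * |s| = |u - r| := by
      rw [hs, abs_mul, abs_pow]
    have h1 : |u - r| ≤ |u| + |r| := abs_sub _ _
    have h2 : |b| ^ w * (2 * |s|) < |b| ^ w * (2 + |b| ^ (w - 1)) := by
      nlinarith [abs_nonneg s, abs_nonneg u, abs_nonneg r]
    have h3 : 2 * |s| < 2 + |b| ^ (w - 1) := lt_of_mul_lt_mul_left h2 (le_of_lt hbw_pos)
    omega
  have hpow1 : (2:ℤ) ≤ |b| ^ (w - 1) := by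
    calc (2:ℤ) ≤ |b| := hb
      _ = |b| ^ 1 := (pow_one _).symm
      _ ≤ |b| ^ (w - 1) := pow_le_pow_right₀ hb1 (by omega)
  have hpow2 : |b| ^ (w - 1) + 1 < |b| ^ w := by
    have hww : |b| ^ w = |b| ^ (w - 1) * |b| := by
      conv_lhs => rw [show w = (w - 1) + 1 by omega]
      rw [pow_succ]
    rw [hww]; nlinarith
  rcases eq_or_ne s 0 with rfl | hs0
  · have huD : u ∈ IntDigitSet b w := by
      rw [hu_eq]; simpa using hrD
    obtain ⟨η, e1, e2, e3, e4⟩ :=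
      pair_expansion b w (by omega) (m + j) (m + j + w) u 0 huD h0D le_rfl
    refine ⟨η, e1, e2, ?_, e4⟩
    rw [e3, hju, pow_add]; ring
  · obtain ⟨i, t, hit, hbt, hts⟩ := exists_factor_pow b hb s hs0
    have htD : t ∈ IntDigitSet b w := by
      refine Or.inr ⟨hbt, ?_⟩
      have : 2 * |t| ≤ 2 * |s| := by linarith
      omega
    obtain ⟨η, e1, e2, e3, e4⟩ :=
      pair_expansion b w (by omega) (m + j) (m + j + w + i) r t hrD htD (by omega)
    refine ⟨η, e1, e2, ?_, e4⟩
    rw [e3, hju, hu_eq, hit]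
    simp [pow_add]
    ring

/-- The digit set `IntDigitSet b w` is `w`-subadditive: for all nonzero digits
`c`, `d` and all `m`, `n`, the integer `b^m·c + b^n·d` is the value of some
`w`-NAF-expansion of weight at most `2`. -/
theorem int_digit_set_wsubadditive (b : ℤ) (hb : 2 ≤ |b|) (w : ℕ) (hw : 2 ≤ w) :
    ∀ c ∈ IntDigitSet b w, ∀ d ∈ IntDigitSet b w, c ≠ 0 → d ≠ 0 → ∀ m n : ℕ,
      ∃ η : ℕ →₀ ℤ, IsExpansion (IntDigitSet b w) η ∧ IsWNAF w η ∧
        evalue b η = b ^ m * c + b ^ n * d ∧ eweight η ≤ 2 := by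
  have hb1 : (1:ℤ) ≤ |b| := by linarith
  have hbw_pos : (0:ℤ) < |b| ^ w := pow_pos (by linarith) w
  have hbound : ∀ c ∈ IntDigitSet b w, 2 * |c| < |b| ^ w := by
    intro c hc
    rcases hc with rfl | h
    · simpa using hbw_pos
    · exact h.2
  have key : ∀ c ∈ IntDigitSet b w, ∀ d ∈ IntDigitSet b w, ∀ m n : ℕ, m ≤ n →
      ∃ η : ℕ →₀ ℤ, IsExpansion (IntDigitSet b w) η ∧ IsWNAF w η ∧
        evalue b η = b ^ m * c + b ^ n * d ∧ eweight η ≤ 2 := by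
    intro c hc d hd m n hmn
    by_cases hsep : m + w ≤ n
    · exact pair_expansion b w (by omega) m n c d hc hd hsep
    · set k := n - m with hk
      have hn : n = m + k := by omega
      have hkw : k ≤ w - 1 := by omega
      have h2c : 2 * |c| < |b| ^ w := hbound c hc
      have h2d : 2 * |d| < |b| ^ w := hbound d hd
      have hbk_pos : (0:ℤ) < |b| ^ k := pow_pos (by linarith) k
      have hbk_le : |b| ^ k ≤ |b| ^ (w - 1) := pow_le_pow_right₀ hb1 hkw
      have hz : 2 * |c + b ^ k * d| < |b| ^ w * (1 + |b| ^ (w - 1)) := by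
        have h1 : |c + b ^ k * d| ≤ |c| + |b| ^ k * |d| := by
          calc |c + b ^ k * d| ≤ |c| + |b ^ k * d| := abs_add_le _ _
            _ = |c| + |b| ^ k * |d| := by rw [abs_mul, abs_pow]
        nlinarith [abs_nonneg d]
      obtain ⟨η, e1, e2, e3, e4⟩ := expand_small b hb w hw (c + b ^ k * d) hz m
      refine ⟨η, e1, e2, ?_, e4⟩
      rw [e3, hn, pow_add]; ring
  intro c hc d hd _ _ m n
  rcases le_total m n with h | h
  · exact key c hc d hd m n h
  · obtain ⟨η, e1, e2, e3, e4⟩ := key d hd c hc n m h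
    exact ⟨η, e1, e2, by rw [e3]; ring, e4⟩
end
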